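/- arXiv:2601.01379 — 7 statements merged into one kernel-verified Lean document; each statement's English description precedes it below -/
import Mathlib

section
/- For any finite symmetric group S_n with n ≥ 4 and any complex irreducible character χ of S_n, if χ vanishes on the conjugacy class of 3-cycles and on the conjugacy class of products of two disjoint transpositions, then n(n-1)/2 is a perfect square. -/
/-!
Let `K` be the class of transpositions, `t ∈ K`, and `d = χ(1)`. By Schur's lemma the class sum
of `K` acts on `V` by a scalar, which gives `|K| χ(t)² = d · ∑_{g ∈ K} χ(g t)`. For `g ≠ t`
the product `g t` is a 3-cycle or a double transposition, so the sum is just `χ(1) = d`. Hence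
`|K| χ(t)² = d²` with `χ(t)` an integer (`t` is an involution) and `d ≠ 0`, so
`|K| = n(n-1)/2` is a perfect square.
-/

open CategoryTheory Equiv Finset Module

theorem LinearMap.exists_trace_eq_intCast_of_mul_self_eq_one {k M : Type*} [Field k]
    [NeZero (2 : k)] [AddCommGroup M] [Module k M] [FiniteDimensional k M]
    {f : Module.End k M} (hf : f * f = 1) : ∃ a : ℤ, trace k M f = a := by
  have h2 : (2 : k)⁻¹ * 2 = 1 := inv_mul_cancel₀ two_ne_zero
  -- `p` is the projection onto the `1`-eigenspace of `f`, so its trace is a dimension.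
  set p : Module.End k M := (2⁻¹ : k) • (1 + f)
  have hp : IsIdempotentElem p := by
    simp only [IsIdempotentElem, p, smul_mul_smul, add_mul, mul_add, hf, one_mul, mul_one]
    ext x
    simp only [LinearMap.smul_apply, LinearMap.add_apply, Module.End.one_apply]
    match_scalars <;> linear_combination (2 : k)⁻¹ * h2
  obtain ⟨r, hr⟩ : ∃ r : ℕ, trace k M p = r :=
    ⟨_, (LinearMap.isProj_range_iff_isIdempotentElem p).mpr hp |>.trace⟩
  refine ⟨2 * r - finrank k M, ?_⟩
  simp only [p, map_smul, map_add, LinearMap.trace_one, smul_eq_mul] at hr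
  push_cast
  linear_combination (2 : k) * hr - (trace k M f + finrank k M) * h2

namespace FDRep

variable {k G : Type*} [Field k] [Group G]

theorem finrank_ne_zero_of_simple (V : FDRep k G) [Simple V] : finrank k V ≠ 0 := by
  intro h
  have : Subsingleton V := finrank_zero_iff.mp h
  exact id_nonzero V (Action.hom_ext _ _ (FGModuleCat.hom_ext <| LinearMap.ext fun _ =>
    Subsingleton.elim _ _))

variable [IsAlgClosed k]

theorem exists_sum_ρ_eq_smul_id (V : FDRep k G) [Simple V] (K : Finset G)
    (hK : ∀ h, ∀ g ∈ K, h * g * h⁻¹ ∈ K) :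
    ∃ c : k, ∑ g ∈ K, V.ρ g = c • LinearMap.id := by
  have hcomm : ∀ h, V.ρ h * ∑ g ∈ K, V.ρ g = (∑ g ∈ K, V.ρ g) * V.ρ h := by
    intro h
    rw [Finset.mul_sum, Finset.sum_mul]
    refine Finset.sum_nbij' (fun g => h * g * h⁻¹) (fun g => h⁻¹ * g * h) (hK h) ?_ ?_ ?_ ?_
    · intro g hg
      simpa using hK h⁻¹ g hg
    · intro g _; group
    · intro g _; group
    · intro g _
      rw [← map_mul, ← map_mul]
      group
  let T : V ⟶ V :=
    ⟨FGModuleCat.ofHom (∑ g ∈ K, V.ρ g), fun h => FGModuleCat.hom_ext (hcomm h).symm⟩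
  obtain ⟨c, hc⟩ := endomorphism_simple_eq_smul_id k T
  exact ⟨c, (congrArg (fun f => f.hom.hom) (congrArg Action.Hom.hom hc)).symm⟩

theorem card_mul_character_mul_character (V : FDRep k G) [Simple V] {K : Finset G} {x : G}
    (hK : ∀ g, g ∈ K ↔ IsConj x g) (y : G) :
    #K * V.character x * V.character y = finrank k V * ∑ g ∈ K, V.character (g * y) := by
  obtain ⟨c, hc⟩ := V.exists_sum_ρ_eq_smul_id K fun h g hg =>
    (hK _).2 <| ((hK g).1 hg).trans <| isConj_iff.2 ⟨h, rfl⟩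
  have htrace : c * finrank k V = #K * V.character x := by
    calc c * finrank k V = LinearMap.trace k V (∑ g ∈ K, V.ρ g) := by simp [hc]
      _ = ∑ g ∈ K, V.character g := map_sum _ _ _
      _ = #K * V.character x := by
        rw [Finset.sum_congr rfl fun g hg => ?_, sum_const, nsmul_eq_mul]
        obtain ⟨h, rfl⟩ := isConj_iff.1 ((hK g).1 hg)
        exact V.char_conj x h
  have htrace_mul : c * V.character y = ∑ g ∈ K, V.character (g * y) := by
    calc c * V.character y = LinearMap.trace k V ((∑ g ∈ K, V.ρ g) * V.ρ y) := by
          rw [hc, smul_mul_assoc, map_smul, smul_eq_mul, ← Module.End.one_eq_id, one_mul]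
          rfl
      _ = ∑ g ∈ K, V.character (g * y) := by
        simp only [Finset.sum_mul, map_sum, ← map_mul, character]
  linear_combination (-V.character y) * htrace + (finrank k V : k) * htrace_mul

end FDRep

namespace Equiv.Perm

variable {α : Type*} [Fintype α] [DecidableEq α]

theorem cycleType_eq_three_or_two_two_of_sign_eq_one {σ : Perm α} (h1 : σ ≠ 1)
    (h4 : #σ.support ≤ 4) (hs : sign σ = 1) : σ.cycleType = {3} ∨ σ.cycleType = {2, 2} := by
  have hsum : σ.cycleType.sum ≤ 4 := σ.sum_cycleType ▸ h4
  have h2 : ∀ a ∈ σ.cycleType, 2 ≤ a := fun _ => two_le_of_mem_cycleType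
  have heven : Even (σ.cycleType.sum + Multiset.card σ.cycleType) := by
    rw [sign_of_cycleType, neg_one_pow_eq_one_iff_even (by decide)] at hs
    exact hs
  have hcard : Multiset.card σ.cycleType * 2 ≤ σ.cycleType.sum :=
    Multiset.card_nsmul_le_sum h2
  have hpos : 0 < Multiset.card σ.cycleType :=
    Multiset.card_pos.2 (by simpa [cycleType_eq_zero] using h1)
  obtain hc | hc : Multiset.card σ.cycleType = 1 ∨ Multiset.card σ.cycleType = 2 := by omega
  · obtain ⟨a, ha⟩ := Multiset.card_eq_one.mp hc
    have := h2 a (by simp [ha])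
    simp only [ha, Multiset.sum_singleton, Multiset.card_singleton] at hsum heven ⊢
    obtain ⟨r, hr⟩ := heven
    left; congr; omega
  · obtain ⟨a, b, hab⟩ := Multiset.card_eq_two.mp hc
    have := h2 a (by simp [hab])
    have := h2 b (by simp [hab])
    simp only [hab, Multiset.insert_eq_cons, Multiset.sum_cons, Multiset.sum_singleton] at hsum ⊢
    right; congr <;> omega

theorem IsSwap.cycleType_mul {σ τ : Perm α} (hσ : σ.IsSwap) (hτ : τ.IsSwap)
    (hne : σ ≠ τ) :
    (σ * τ).cycleType = {3} ∨ (σ * τ).cycleType = {2, 2} := by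
  obtain ⟨a, b, hab, rfl⟩ := hσ
  obtain ⟨c, d, hcd, rfl⟩ := hτ
  refine cycleType_eq_three_or_two_two_of_sign_eq_one ?_ ?_ ?_
  · rwa [Ne, mul_eq_one_iff_eq_inv, swap_inv]
  · calc #(swap a b * swap c d).support ≤ #(swap a b).support + #(swap c d).support :=
          (card_le_card (support_mul_le _ _)).trans (card_union_le _ _)
      _ = 4 := by rw [card_support_swap hab, card_support_swap hcd]
  · rw [map_mul, sign_swap hab, sign_swap hcd]; decide

theorem two_mul_card_cycleType_eq_singleton_two (h : 2 ≤ Fintype.card α) :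
    2 * #({g | g.cycleType = {2}} : Finset (Perm α)) =
      Fintype.card α * (Fintype.card α - 1) := by
  rw [card_of_cycleType_singleton le_rfl h, Nat.factorial_one, one_mul, Nat.choose_two_right]
  exact Nat.mul_div_cancel' (Nat.even_mul_pred_self _).two_dvd

end Equiv.Perm

theorem Nat.isSquare_of_mul_sq_eq_sq {N : ℕ} {a b : ℤ} (ha : a ≠ 0)
    (h : N * a ^ 2 = b ^ 2) : IsSquare N := by
  have hq : (N : ℚ) = (b / a) ^ 2 := by
    field_simp
    exact_mod_cast h
  exact Rat.isSquare_natCast_iff.1 ⟨b / a, by rw [hq, sq]⟩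

/-- If `n ≥ 4` and a complex irreducible character of `S_n` vanishes on the class of
3-cycles and on the class of double transpositions, then `n(n-1)/2` is a perfect square. -/
theorem stmt1 (n : ℕ) (hn : 4 ≤ n) (V : FDRep ℂ (Equiv.Perm (Fin n)))
    [CategoryTheory.Simple V]
    (h3 : ∀ g : Equiv.Perm (Fin n), g.cycleType = {3} → V.character g = 0)
    (h22 : ∀ g : Equiv.Perm (Fin n), g.cycleType = {2, 2} → V.character g = 0) :
    ∃ m : ℕ, n * (n - 1) = 2 * m ^ 2 := by
  classical
  set K : Finset (Perm (Fin n)) := {g | g.cycleType = {2}}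
  have hcard : 2 * #K = n * (n - 1) := by
    simpa using Perm.two_mul_card_cycleType_eq_singleton_two (α := Fin n) (by simp; omega)
  obtain ⟨t, ht, htt⟩ : ∃ t : Perm (Fin n), t.IsSwap ∧ t * t = 1 :=
    ⟨swap ⟨0, by omega⟩ ⟨1, by omega⟩, ⟨_, _, by simp [Fin.ext_iff], rfl⟩, swap_mul_self _ _⟩
  have hK : ∀ g, g ∈ K ↔ IsConj t g := fun g => by
    rw [Perm.isConj_iff_cycleType_eq, Perm.isSwap_iff_cycleType.1 ht]
    simp [K, eq_comm]
  have hsum : ∑ g ∈ K, V.character (g * t) = finrank ℂ V := by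
    rw [sum_eq_single t (fun g hg hne => ?_) (absurd ((hK t).2 (IsConj.refl t))), htt,
      FDRep.char_one]
    rcases (Perm.isSwap_iff_cycleType.2 (mem_filter.1 hg).2).cycleType_mul ht hne with h | h
    exacts [h3 _ h, h22 _ h]
  obtain ⟨a, ha⟩ := LinearMap.exists_trace_eq_intCast_of_mul_self_eq_one (f := V.ρ t)
    (by rw [← map_mul, htt, map_one])
  have hrel := V.card_mul_character_mul_character hK t
  rw [hsum, FDRep.character, ha] at hrel
  have hsq : (#K : ℤ) * a ^ 2 = (finrank ℂ V : ℤ) ^ 2 := by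
    have : (#K : ℂ) * a ^ 2 = (finrank ℂ V : ℂ) ^ 2 := by linear_combination hrel
    exact_mod_cast this
  have ha0 : a ≠ 0 := by
    rintro rfl
    exact V.finrank_ne_zero_of_simple (by simpa using hsq.symm)
  obtain ⟨m, hm⟩ := Nat.isSquare_of_mul_sq_eq_sq ha0 hsq
  exact ⟨m, by rw [← hcard, hm, sq]⟩
end

section
/- For any finite symmetric group S_n with n ≥ 4 and any complex irreducible character χ of S_n, at least one of the values χ at a transposition, χ at a 3-cycle, and χ at a double transposition is nonzero. -/
/-!
If `χ` vanished at all three classes, Schur's lemma would make the class sum `T` of the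
transpositions a scalar of trace `∑ χ(σ) = 0`, hence `T = 0`. But a product of two
transpositions is the identity, a 3-cycle or a double transposition, so
`tr (T * T) = ∑ χ(σ τ) = #{transpositions} * dim V ≠ 0`.
-/

open CategoryTheory Equiv Equiv.Perm Module

namespace Equiv.Perm

variable {α : Type*} [DecidableEq α] [Fintype α]

theorem swap_mul_swap_same_eq_one_or_isThreeCycle {a b c : α} (hab : a ≠ b) (hac : a ≠ c) :
    swap a b * swap a c = 1 ∨ (swap a b * swap a c).IsThreeCycle := by
  by_cases hbc : b = c
  · subst hbc
    exact Or.inl (swap_mul_self a b)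
  · exact Or.inr (isThreeCycle_swap_mul_swap_same hab hac hbc)

theorem IsSwap.mul_eq_one_or_isThreeCycle_or_cycleType_eq {σ τ : Perm α} (hσ : σ.IsSwap)
    (hτ : τ.IsSwap) : σ * τ = 1 ∨ (σ * τ).IsThreeCycle ∨ (σ * τ).cycleType = {2, 2} := by
  obtain ⟨a, b, hab, rfl⟩ := hσ
  obtain ⟨c, d, hcd, rfl⟩ := hτ
  by_cases hac : a = c
  · subst hac
    exact (swap_mul_swap_same_eq_one_or_isThreeCycle hab hcd).imp_right Or.inl
  by_cases had : a = d
  · subst had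
    rw [swap_comm c a]
    exact (swap_mul_swap_same_eq_one_or_isThreeCycle hab hcd.symm).imp_right Or.inl
  by_cases hbc : b = c
  · subst hbc
    rw [swap_comm a b]
    exact (swap_mul_swap_same_eq_one_or_isThreeCycle hab.symm hcd).imp_right Or.inl
  by_cases hbd : b = d
  · subst hbd
    rw [swap_comm a b, swap_comm c b]
    exact (swap_mul_swap_same_eq_one_or_isThreeCycle hab.symm hcd.symm).imp_right Or.inl
  exact Or.inr (Or.inr (cycleType_swap_mul_swap_of_nodup (by simp [*])))

end Equiv.Perm

namespace FDRep

variable {k G : Type*} [Field k] [Group G] (V : FDRep k G)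

theorem char_eq_of_isConj {g h : G} (hgh : IsConj g h) : V.character g = V.character h := by
  obtain ⟨c, rfl⟩ := isConj_iff.mp hgh
  exact (V.char_conj g c).symm

theorem finrank_ne_zero [Simple V] : finrank k V ≠ 0 := by
  intro h
  have : Subsingleton V := finrank_zero_iff.mp h
  exact id_nonzero V (Action.hom_ext _ _ (by ext v; exact Subsingleton.elim _ _))

theorem commute_rho_sum_rho {S : Finset G} (hS : ∀ g, ∀ s ∈ S, g * s * g⁻¹ ∈ S) (g : G) :
    Commute (V.ρ g) (∑ s ∈ S, V.ρ s) := by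
  have hconj : ∀ s, s ∈ S ↔ MulAut.conj g s ∈ S := fun s =>
    ⟨hS g s, fun h => by simpa [mul_assoc] using hS g⁻¹ _ h⟩
  rw [Commute, SemiconjBy, Finset.mul_sum, Finset.sum_mul]
  refine Finset.sum_equiv (MulAut.conj g).toEquiv hconj fun s _ => ?_
  simp [← map_mul, mul_assoc]

theorem sum_rho_eq_smul_id [IsAlgClosed k] [Simple V] {S : Finset G}
    (hS : ∀ g, ∀ s ∈ S, g * s * g⁻¹ ∈ S) : ∃ μ : k, ∑ s ∈ S, V.ρ s = μ • LinearMap.id := by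
  let f : V ⟶ V := ⟨FGModuleCat.ofHom (∑ s ∈ S, V.ρ s), fun g => by
    ext v
    exact (LinearMap.congr_fun (V.commute_rho_sum_rho hS g).eq v).symm⟩
  obtain ⟨μ, hμ⟩ := endomorphism_simple_eq_smul_id k f
  exact ⟨μ, (congrArg (fun φ => φ.hom.hom.hom) hμ).symm⟩

theorem sum_rho_eq_zero_of_char_eq_zero [IsAlgClosed k] [CharZero k] [Simple V]
    {S : Finset G} (hS : ∀ g, ∀ s ∈ S, g * s * g⁻¹ ∈ S) (hχ : ∀ s ∈ S, V.character s = 0) :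
    ∑ s ∈ S, V.ρ s = 0 := by
  obtain ⟨μ, hμ⟩ := V.sum_rho_eq_smul_id hS
  have htrace : μ * finrank k V = 0 := by
    rw [← LinearMap.trace_id, ← smul_eq_mul, ← map_smul, ← hμ, map_sum]
    exact Finset.sum_eq_zero hχ
  have hμ0 : μ = 0 := (mul_eq_zero.mp htrace).resolve_right (by exact_mod_cast V.finrank_ne_zero)
  rw [hμ, hμ0, zero_smul]

theorem sum_sum_char_mul_eq_zero [IsAlgClosed k] [CharZero k] [Simple V] {S : Finset G}
    (hS : ∀ g, ∀ s ∈ S, g * s * g⁻¹ ∈ S) (hχ : ∀ s ∈ S, V.character s = 0) :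
    ∑ s ∈ S, ∑ t ∈ S, V.character (s * t) = 0 := by
  have htrace := congrArg (fun T => LinearMap.trace k V (T * T))
    (V.sum_rho_eq_zero_of_char_eq_zero hS hχ)
  simp only [Finset.sum_mul_sum, map_sum, ← map_mul, zero_mul, map_zero] at htrace
  exact htrace

section Perm

variable {α : Type*} [DecidableEq α] [Fintype α] (V : FDRep k (Perm α))

theorem char_eq_of_cycleType_eq {σ τ : Perm α} (h : σ.cycleType = τ.cycleType) :
    V.character σ = V.character τ :=
  V.char_eq_of_isConj (isConj_iff_cycleType_eq.mpr h)

theorem char_swap_mul_swap {c d : Perm α} (hc : c.cycleType = {3}) (hd : d.cycleType = {2, 2})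
    (hc0 : V.character c = 0) (hd0 : V.character d = 0) {σ τ : Perm α} (hσ : σ.IsSwap)
    (hτ : τ.IsSwap) : V.character (σ * τ) = if σ⁻¹ = τ then (finrank k V : k) else 0 := by
  by_cases h1 : σ * τ = 1
  · rw [if_pos (mul_eq_one_iff_inv_eq.1 h1), h1, char_one]
  rw [if_neg (mt mul_eq_one_iff_inv_eq.2 h1)]
  rcases hσ.mul_eq_one_or_isThreeCycle_or_cycleType_eq hτ with h1' | h3 | h22
  · exact absurd h1' h1
  · exact (V.char_eq_of_cycleType_eq (h3.trans hc.symm)).trans hc0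
  · exact (V.char_eq_of_cycleType_eq (h22.trans hd.symm)).trans hd0

end Perm

end FDRep

theorem stmt2_general (n : ℕ) (V : FDRep ℂ (Equiv.Perm (Fin n)))
    [CategoryTheory.Simple V]
    (t c d : Equiv.Perm (Fin n)) (ht : t.cycleType = {2}) (hc : c.cycleType = {3})
    (hd : d.cycleType = {2, 2}) :
    V.character t ≠ 0 ∨ V.character c ≠ 0 ∨ V.character d ≠ 0 := by
  classical
  by_contra! h
  obtain ⟨ht0, hc0, hd0⟩ := h
  let S : Finset (Perm (Fin n)) := {σ | σ.cycleType = {2}}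
  have hS : ∀ σ, σ ∈ S ↔ σ.IsSwap := by simp [S, isSwap_iff_cycleType]
  have hSinv : ∀ σ, σ⁻¹ ∈ S ↔ σ ∈ S := by simp [S, cycleType_inv]
  have hsum := V.sum_sum_char_mul_eq_zero (S := S)
    (fun g σ hσ => by simpa [S, cycleType_conj] using hσ)
    (fun σ hσ => (V.char_eq_of_cycleType_eq (by simpa [S, ht] using hσ)).trans ht0)
  rw [Finset.sum_congr rfl fun σ hσ => Finset.sum_congr rfl fun τ hτ =>
    V.char_swap_mul_swap hc hd hc0 hd0 ((hS σ).1 hσ) ((hS τ).1 hτ)] at hsum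
  simp only [Finset.sum_ite_eq, hSinv, Finset.sum_ite_mem, Finset.inter_self, Finset.sum_const,
    nsmul_eq_mul, mul_eq_zero, Nat.cast_eq_zero, Finset.card_eq_zero] at hsum
  exact hsum.elim (Finset.ne_empty_of_mem (by simpa [S] using ht)) V.finrank_ne_zero

/-- For `n ≥ 4` and any complex irreducible character of `S_n`, at least one of its values
at a transposition, a 3-cycle, and a double transposition is nonzero. -/
theorem stmt2 (n : ℕ) (hn : 4 ≤ n) (V : FDRep ℂ (Equiv.Perm (Fin n)))
    [CategoryTheory.Simple V]
    (t c d : Equiv.Perm (Fin n)) (ht : t.cycleType = {2}) (hc : c.cycleType = {3})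
    (hd : d.cycleType = {2, 2}) :
    V.character t ≠ 0 ∨ V.character c ≠ 0 ∨ V.character d ≠ 0 :=
  stmt2_general n V t c d ht hc hd
end

section
/- For positive integers a > b, the product Π_{i=1}^{b} (a(a+1)/2 − i(i+1)/2) equals (a+b+1)! / ((a−b−1)! · 2^b · a · (a+1)). -/
/-- For positive integers `a > b`,
`∏_{i=1}^{b} (a(a+1)/2 − i(i+1)/2) = (a+b+1)! / ((a−b−1)!·2^b·a·(a+1))`. -/
theorem stmt8 (a b : ℕ) (hb : 1 ≤ b) (hab : b < a) :
    ∏ i ∈ Finset.Icc 1 b, ((a : ℚ) * ((a : ℚ) + 1) / 2 - (i : ℚ) * ((i : ℚ) + 1) / 2) =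
      (Nat.factorial (a + b + 1) : ℚ) /
        ((Nat.factorial (a - b - 1) : ℚ) * 2 ^ b * (a : ℚ) * ((a : ℚ) + 1)) := by
  induction b, hb using Nat.le_induction with
  | base =>
    obtain ⟨k, rfl⟩ : ∃ k, a = k + 2 := ⟨a - 2, by omega⟩
    have hk : ((Nat.factorial k : ℚ)) ≠ 0 := by
      exact_mod_cast Nat.factorial_ne_zero k
    simp only [Finset.Icc_self, Finset.prod_singleton]
    show _ = ((Nat.factorial (k + 4) : ℚ)) / ((Nat.factorial k : ℚ) * 2 ^ 1 * _ * _)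
    have : Nat.factorial (k + 4) = (k+4) * ((k+3) * ((k+2) * ((k+1) * Nat.factorial k))) := by
      simp [Nat.factorial_succ]
    rw [this]
    push_cast
    field_simp
    ring
  | succ b hb ih =>
    have hba : b < a := by omega
    obtain ⟨m, rfl⟩ : ∃ m, a = m + b + 2 := ⟨a - b - 2, by omega⟩
    rw [Finset.prod_Icc_succ_top (by omega : 1 ≤ b + 1), ih hba]
    have e1 : m + b + 2 - b - 1 = m + 1 := by omega
    have e2 : m + b + 2 - (b + 1) - 1 = m := by omega
    have e3 : m + b + 2 + (b + 1) + 1 = (m + b + 2 + b + 1) + 1 := by omega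
    rw [e1, e2, e3, Nat.factorial_succ (m + b + 2 + b + 1), Nat.factorial_succ m]
    have hm : ((Nat.factorial m : ℚ)) ≠ 0 := by exact_mod_cast Nat.factorial_ne_zero m
    push_cast
    field_simp
    ring
end

section
/- Suppose n ≥ 5 and χ is a complex irreducible character of S_n whose normalized value at 3-cycles is χ((3))/χ(1) = 1/((n−2)(n−5)). Then n(n−1)/(3(n−5)) is an integer, hence n − 5 has no prime factor other than 2 and 5, is not divisible by 8 or 25, and therefore n ∈ {6, 7, 9, 10, 15, 25}. -/
set_option linter.unusedSectionVars false
set_option linter.unreachableTactic false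
set_option linter.unusedTactic false
open CategoryTheory MonoidAlgebra Equiv Equiv.Perm List

section Aux
variable {G : Type} [Group G] [Fintype G] [DecidableEq G]



theorem isIntegral_of_eigen (K : Finset G) (μ : ℂ)
    (h : ∃ v : MonoidAlgebra ℂ G, v ≠ 0 ∧ (∑ g ∈ K, MonoidAlgebra.single g (1:ℂ)) * v = μ • v) :
    IsIntegral ℤ μ := by
  classical
  set A := MonoidAlgebra ℂ G
  set z : A := ∑ g ∈ K, MonoidAlgebra.single g (1:ℂ) with hz
  set L : Module.End ℂ A := LinearMap.mulLeft ℂ z with hL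
  set b : Module.Basis G ℂ A := MonoidAlgebra.basis G ℂ with hb
  have : FiniteDimensional ℂ A := Module.Finite.of_basis b
  have hev : Module.End.HasEigenvalue L μ := by
    obtain ⟨v, hv0, hv⟩ := h
    apply Module.End.hasEigenvalue_of_hasEigenvector (x := v)
    exact ⟨by rw [Module.End.mem_eigenspace_iff]; exact hv, hv0⟩
  set M : Matrix G G ℤ := Matrix.of (fun g h => if g * h⁻¹ ∈ K then 1 else 0) with hM
  have hmat : LinearMap.toMatrix b b L = M.map (Int.castRingHom ℂ) := by
    ext g h
    rw [LinearMap.toMatrix_apply]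
    have hbh : b h = MonoidAlgebra.single h (1:ℂ) := rfl
    rw [hbh]
    have h2 : L (MonoidAlgebra.single h 1) = ∑ k ∈ K, MonoidAlgebra.single (k*h) (1:ℂ) := by
      rw [hL, LinearMap.mulLeft_apply, hz, Finset.sum_mul]
      exact Finset.sum_congr rfl fun k _ => by
        rw [MonoidAlgebra.single_mul_single, one_mul]
    rw [h2]
    have hrepr : ∀ w : A, b.repr w = w.coeff := fun w => rfl
    rw [hrepr, MonoidAlgebra.coeff_sum, Finsupp.finset_sum_apply]
    simp only [MonoidAlgebra.coeff_single, Finsupp.single_apply]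
    simp only [← eq_mul_inv_iff_mul_eq, Finset.sum_ite_eq' K (g * h⁻¹) (fun _ => (1:ℂ))]
    simp [hM, Matrix.map_apply, apply_ite (Int.cast : ℤ → ℂ)]
  -- μ is root of charpoly of M
  have hroot : Polynomial.IsRoot (M.charpoly.map (Int.castRingHom ℂ)) μ := by
    have h4 : L.charpoly = M.charpoly.map (Int.castRingHom ℂ) := by
      rw [← LinearMap.charpoly_toMatrix L b, hmat, Matrix.charpoly_map]
    have h5 : (minpoly ℂ L).IsRoot μ := (Module.End.hasEigenvalue_iff_isRoot).mp hev
    have h6 : minpoly ℂ L ∣ L.charpoly := minpoly.dvd ℂ L (LinearMap.aeval_self_charpoly L)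
    rw [← h4]
    obtain ⟨q, hq⟩ := h6
    rw [hq]
    simp [Polynomial.IsRoot, Polynomial.eval_mul, h5.eq_zero]
  exact ⟨M.charpoly, M.charpoly_monic, by
    rw [Polynomial.eval₂_eq_eval_map]; exact hroot⟩



theorem exists_eigen (z : MonoidAlgebra ℂ G) {W : Type} [AddCommGroup W] [Module ℂ W] [Nontrivial W]
    (ρ : Representation ℂ G W) (μ : ℂ)
    (hπ : ρ.asAlgebraHom z = μ • (LinearMap.id : W →ₗ[ℂ] W)) :
    ∃ v : MonoidAlgebra ℂ G, v ≠ 0 ∧ z * v = μ • v := by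
  classical
  haveI : FiniteDimensional ℂ (MonoidAlgebra ℂ G) :=
    Module.Finite.of_basis (MonoidAlgebra.basis G ℂ : Module.Basis G ℂ (MonoidAlgebra ℂ G))
  set w : MonoidAlgebra ℂ G := z - algebraMap ℂ (MonoidAlgebra ℂ G) μ with hw
  have hπw : ρ.asAlgebraHom w = 0 := by
    rw [hw, map_sub, AlgHom.commutes, hπ, Algebra.algebraMap_eq_smul_one]
    simp [Module.End.one_eq_id]
  by_cases hinj : Function.Injective (LinearMap.mulLeft ℂ w)
  · exfalso
    have hsurj := (LinearMap.injective_iff_surjective).mp hinj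
    obtain ⟨u, hu⟩ := hsurj 1
    have h1 : ρ.asAlgebraHom (w * u) = ρ.asAlgebraHom 1 := by
      rw [LinearMap.mulLeft_apply] at hu; rw [hu]
    rw [map_mul, hπw, zero_mul, map_one] at h1
    obtain ⟨x, hx⟩ := exists_ne (0 : W)
    apply hx
    calc x = (1 : Module.End ℂ W) x := rfl
    _ = (0 : Module.End ℂ W) x := by rw [h1]
    _ = 0 := rfl
  · rw [Function.not_injective_iff] at hinj
    obtain ⟨a, b, hab, hne⟩ := hinj
    refine ⟨a - b, sub_ne_zero.mpr hne, ?_⟩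
    have h0 : w * (a - b) = 0 := by
      rw [mul_sub]; rw [LinearMap.mulLeft_apply, LinearMap.mulLeft_apply] at hab
      rw [hab, sub_self]
    rw [hw, sub_mul, sub_eq_zero] at h0
    rw [h0, Algebra.smul_def]



theorem fdRep_nontrivial (V : FDRep ℂ G) [Simple V] : Nontrivial V := by
  rcases subsingleton_or_nontrivial V with h | h
  · exfalso
    apply id_nonzero V
    have : (𝟙 V : V ⟶ V).hom = (0 : V ⟶ V).hom := FGModuleCat.hom_ext (LinearMap.ext fun v => @Subsingleton.elim _ h _ _)
    exact Action.Hom.ext this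
  · exact h

theorem schur_scalar (V : FDRep ℂ G) [Simple V] (T : V →ₗ[ℂ] V)
    (hT : ∀ g : G, T ∘ₗ (V.ρ g) = (V.ρ g) ∘ₗ T) :
    ∃ μ : ℂ, T = μ • LinearMap.id := by
  let f : V ⟶ V := ⟨FGModuleCat.ofHom T, fun g => by ext v; exact congrFun (congrArg (fun h => h.toFun) (hT g)) v⟩
  obtain ⟨μ, hμ⟩ := endomorphism_simple_eq_smul_id ℂ f
  refine ⟨μ, ?_⟩
  have h2 := congrArg (fun x => x.hom.hom.hom) hμ
  ext v
  exact (LinearMap.congr_fun h2 v).symm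

theorem central_char (V : FDRep ℂ G) [Simple V] (c : G) (K : Finset G)
    (hK : ∀ g : G, g ∈ K ↔ IsConj c g) :
    ∃ μ : ℂ, IsIntegral ℤ μ ∧
      (K.card : ℂ) * V.character c = μ * (Module.finrank ℂ V : ℂ) := by
  classical
  set T : Module.End ℂ V := ∑ g ∈ K, V.ρ g with hTdef
  have hcomm : ∀ h : G, T * (V.ρ h) = (V.ρ h) * T := by
    intro h
    rw [hTdef, Finset.sum_mul, Finset.mul_sum]
    refine Finset.sum_nbij' (fun g => h⁻¹ * g * h) (fun g => h * g * h⁻¹) ?_ ?_ ?_ ?_ ?_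
    · intro g hg; rw [hK] at hg ⊢
      exact hg.trans (isConj_iff.mpr ⟨h⁻¹, by group⟩)
    · intro g hg; rw [hK] at hg ⊢
      exact hg.trans (isConj_iff.mpr ⟨h, by group⟩)
    · intro g _; group
    · intro g _; group
    · intro g _
      rw [← map_mul, ← map_mul]; congr 1; group
  obtain ⟨μ, hμ⟩ := schur_scalar V T hcomm
  refine ⟨μ, ?_, ?_⟩
  · haveI := fdRep_nontrivial V
    apply isIntegral_of_eigen K μ
    apply exists_eigen (∑ g ∈ K, MonoidAlgebra.single g (1:ℂ)) V.ρ μ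
    rw [map_sum]
    have : ∀ g ∈ K, Representation.asAlgebraHom V.ρ (MonoidAlgebra.single g (1:ℂ)) = V.ρ g :=
      fun g _ => Representation.asAlgebraHom_single_one _ _
    rw [Finset.sum_congr rfl this, ← hTdef, hμ]
  · have htr : LinearMap.trace ℂ V T = (K.card : ℂ) * V.character c := by
      rw [hTdef, map_sum]
      have : ∀ g ∈ K, LinearMap.trace ℂ V (V.ρ g) = V.character c := by
        intro g hg
        obtain ⟨h, hh⟩ := isConj_iff.mp ((hK g).mp hg)
        rw [← hh]
        exact (FDRep.char_conj V c h)
      rw [Finset.sum_congr rfl this, Finset.sum_const, nsmul_eq_mul]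
    have htr2 : LinearMap.trace ℂ V T = μ * (Module.finrank ℂ V : ℂ) := by
      rw [hμ, map_smul, LinearMap.trace_id, smul_eq_mul]
    rw [← htr, htr2]

end Aux


def tripEquiv (n : ℕ) :
    (Fin 3 ↪ Fin n) ≃ {x : Fin n × Fin n × Fin n // x.1 ≠ x.2.1 ∧ x.1 ≠ x.2.2 ∧ x.2.1 ≠ x.2.2} where
  toFun e := ⟨(e 0, e 1, e 2), by
    refine ⟨?_, ?_, ?_⟩ <;> simp [e.injective.ne_iff]⟩
  invFun x := ⟨![x.1.1, x.1.2.1, x.1.2.2], by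
    obtain ⟨h1, h2, h3⟩ := x.2
    intro i j hij
    fin_cases i <;> fin_cases j <;> first | rfl | (exfalso; simp_all)⟩
  left_inv e := by ext i; fin_cases i <;> rfl
  right_inv x := by ext <;> rfl

theorem count_three_cycles (n : ℕ) (S : Finset (Perm (Fin n)))
    (hS : ∀ σ : Perm (Fin n), σ ∈ S ↔ σ.cycleType = {3}) :
    3 * S.card = n.descFactorial 3 := by
  classical
  set P : Fin n × Fin n × Fin n → Prop := fun x => x.1 ≠ x.2.1 ∧ x.1 ≠ x.2.2 ∧ x.2.1 ≠ x.2.2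
    with hP
  set T : Finset (Fin n × Fin n × Fin n) := Finset.univ.filter P with hT
  have hTcard : T.card = n.descFactorial 3 := by
    rw [hT, ← Fintype.card_subtype]
    rw [← Fintype.card_congr (tripEquiv n)]
    rw [Fintype.card_embedding_eq, Fintype.card_fin, Fintype.card_fin]
  set φ : Fin n × Fin n × Fin n → Perm (Fin n) := fun x => List.formPerm [x.1, x.2.1, x.2.2]
    with hφ
  have hmem : ∀ x ∈ T, φ x ∈ S := by
    rintro ⟨a, b, c⟩ hx
    rw [hT, Finset.mem_filter, hP] at hx
    obtain ⟨-, h1, h2, h3⟩ := hx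
    have hnd : List.Nodup [a, b, c] := by simp [h1, h2, h3]
    have hcyc := List.isCycle_formPerm hnd (by norm_num)
    rw [hS, hcyc.cycleType, List.support_formPerm_of_nodup _ hnd (by simp)]
    congr 1
    rw [List.card_toFinset, List.dedup_eq_self.mpr hnd]
    rfl
  rw [Finset.card_eq_sum_card_fiberwise hmem] at hTcard
  have hfib : ∀ σ ∈ S, (T.filter fun x => φ x = σ).card = 3 := by
    intro σ hσ
    rw [hS] at hσ
    have hcy : σ.IsCycle := by
      rw [← card_cycleType_eq_one, hσ]; rfl
    have hsup : σ.support.card = 3 := by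
      have h := sum_cycleType σ; rw [hσ] at h; simpa using h.symm
    obtain ⟨x, hx⟩ := Finset.card_pos.mp (by rw [hsup]; norm_num : 0 < σ.support.card)
    have hσx : σ x ≠ x := mem_support.mp hx
    have hco : σ.cycleOf x = σ := hcy.cycleOf_eq hσx
    have hfp : (σ.toList x).formPerm = σ := by rw [formPerm_toList, hco]
    have hlen : (σ.toList x).length = 3 := by rw [length_toList, hco, hsup]
    have hnd : (σ.toList x).Nodup := nodup_toList σ x
    obtain ⟨a, b, c, habc⟩ : ∃ a b c, σ.toList x = [a, b, c] := by
      rcases hl : σ.toList x with - | ⟨a, - | ⟨b, - | ⟨c, - | d⟩⟩⟩ <;>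
        simp_all [hl]
    rw [habc] at hfp hnd
    simp only [List.nodup_cons, List.mem_cons, List.mem_singleton, List.not_mem_nil,
      List.nodup_nil, or_false, not_or] at hnd
    obtain ⟨⟨hab, hac⟩, hbc, -⟩ := hnd
    have hndl : List.Nodup [a, b, c] := by simp [hab, hac, hbc]
    have hkey : (T.filter fun x => φ x = σ) =
        {(a, b, c), (b, c, a), (c, a, b)} := by
      ext ⟨u, v, w⟩
      simp only [Finset.mem_filter, hT, Finset.mem_univ, true_and, Finset.mem_insert,
        Finset.mem_singleton, Prod.mk.injEq, hP, hφ]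
      constructor
      · rintro ⟨⟨h1, h2, h3⟩, heq⟩
        have hnduvw : List.Nodup [u, v, w] := by simp [h1, h2, h3]
        rw [← hfp] at heq
        have hrot : [u, v, w] ~r [a, b, c] :=
          (List.formPerm_ext_iff hnduvw hndl).mp heq
        obtain ⟨m, hm⟩ := hrot
        rw [← List.rotate_mod] at hm
        have hm3 : m % [u,v,w].length < 3 := Nat.mod_lt _ (by norm_num)
        interval_cases h : (m % [u,v,w].length) <;>
          simp_all [List.rotate_cons_succ] <;> tauto
      · rintro (⟨h1, h2, h3⟩ | ⟨h1, h2, h3⟩ | ⟨h1, h2, h3⟩) <;> rw [h1, h2, h3]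
        · exact ⟨⟨hab, hac, hbc⟩, hfp⟩
        · refine ⟨⟨hbc, Ne.symm hab, Ne.symm hac⟩, ?_⟩
          have h9 : [b, c, a] = [a, b, c].rotate 1 := by simp [List.rotate_cons_succ]
          rw [h9, List.formPerm_rotate _ hndl, hfp]
        · refine ⟨⟨Ne.symm hac, Ne.symm hbc, hab⟩, ?_⟩
          have h9 : [c, a, b] = [a, b, c].rotate 2 := by simp [List.rotate_cons_succ]
          rw [h9, List.formPerm_rotate _ hndl, hfp]
    rw [hkey]
    rw [Finset.card_insert_of_notMem (by simp [Prod.ext_iff]; tauto),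
      Finset.card_insert_of_notMem (by simp [Prod.ext_iff]; tauto),
      Finset.card_singleton]
  rw [Finset.sum_congr rfl hfib, Finset.sum_const, smul_eq_mul, mul_comm] at hTcard
  exact hTcard

theorem dvd_twenty (e : ℕ) (he : e ∣ 20) :
    e = 0 ∨ e = 1 ∨ e = 2 ∨ e = 4 ∨ e = 5 ∨ e = 10 ∨ e = 20 := by
  have hle : e ≤ 20 := Nat.le_of_dvd (by norm_num) he
  interval_cases e <;> revert he <;> decide

/-- If `n ≥ 5` and `χ` is a complex irreducible character of `S_n` whose normalized value at
3-cycles is `χ((3))/χ(1) = 1/((n−2)(n−5))`, then `n(n−1)/(3(n−5))` is an integer and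
`n ∈ {6, 7, 9, 10, 15, 25}`. -/
theorem stmt13 (n : ℕ) (hn : 5 ≤ n) (V : FDRep ℂ (Equiv.Perm (Fin n)))
    [CategoryTheory.Simple V]
    (c : Equiv.Perm (Fin n)) (hc : c.cycleType = {3})
    (hval : V.character c * (((n : ℂ) - 2) * ((n : ℂ) - 5)) = V.character 1) :
    (3 * ((n : ℤ) - 5)) ∣ (n : ℤ) * ((n : ℤ) - 1) ∧ n ∈ ({6, 7, 9, 10, 15, 25} : Set ℕ) := by
  classical
  haveI := fdRep_nontrivial V
  set d : ℕ := Module.finrank ℂ V with hd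
  have hdpos : 0 < d := Module.finrank_pos
  have hchar1 : V.character 1 = (Module.finrank ℂ V : ℂ) := FDRep.char_one V
  -- n ≥ 6
  have hF0 : (Module.finrank ℂ V : ℂ) ≠ 0 := by
    rw [← hd]; exact_mod_cast hdpos.ne'
  have hn6 : 6 ≤ n := by
    by_contra h
    have hn5 : n = 5 := by omega
    have h5 : ((n : ℂ) - 5) = 0 := by rw [hn5]; norm_num
    apply hF0
    rw [← hchar1, ← hval, h5]
    ring
  -- the conjugacy class
  set K : Finset (Equiv.Perm (Fin n)) :=
    Finset.univ.filter (fun σ => σ.cycleType = {3}) with hKdef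
  have hK : ∀ g : Equiv.Perm (Fin n), g ∈ K ↔ IsConj c g := by
    intro g
    rw [hKdef, Finset.mem_filter, Equiv.Perm.isConj_iff_cycleType_eq, hc]
    simp [eq_comm]
  obtain ⟨μ, hint, hμ⟩ := central_char V c K hK
  have hcount : 3 * K.card = n.descFactorial 3 :=
    count_three_cycles n K (fun σ => by rw [hKdef]; simp)
  -- μ * ((n-2)(n-5)) = K.card
  set p : ℕ := (n - 2) * (n - 5) with hp
  have hpc : ((p : ℂ)) = ((n : ℂ) - 2) * ((n : ℂ) - 5) := by
    rw [hp]
    push_cast [Nat.cast_sub (by omega : 2 ≤ n), Nat.cast_sub (by omega : 5 ≤ n)]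
    ring
  have hp0 : p ≠ 0 := by
    rw [hp]; apply Nat.mul_ne_zero <;> omega
  have hpc0 : (p : ℂ) ≠ 0 := Nat.cast_ne_zero.mpr hp0
  have hmain : μ * (p : ℂ) = (K.card : ℂ) := by
    have h1 : (K.card : ℂ) * (V.character c * (((n : ℂ) - 2) * ((n : ℂ) - 5)))
        = μ * (Module.finrank ℂ V : ℂ) * (((n : ℂ) - 2) * ((n : ℂ) - 5)) := by
      rw [← mul_assoc, hμ]
    rw [hval, hchar1] at h1
    rw [hpc]
    apply mul_right_cancel₀ hF0
    linear_combination -h1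
  -- μ is an integer
  obtain ⟨m, hm⟩ : ∃ m : ℤ, (m : ℂ) = μ := by
    have hq : μ = algebraMap ℚ ℂ ((K.card : ℚ) / (p : ℚ)) := by
      rw [map_div₀, map_natCast, map_natCast, eq_div_iff hpc0]
      exact hmain
    rw [hq] at hint
    have hint2 : IsIntegral ℤ ((K.card : ℚ) / (p : ℚ)) :=
      IsIntegral.tower_bot_of_field hint
    obtain ⟨m, hm⟩ := IsIntegrallyClosed.isIntegral_iff.mp hint2
    refine ⟨m, ?_⟩
    rw [hq, ← hm]
    simp
  -- integer arithmetic
  have hZ : m * (p : ℤ) = (K.card : ℤ) := by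
    rw [← hm] at hmain; exact_mod_cast hmain
  obtain ⟨k, rfl⟩ : ∃ k, n = k + 6 := ⟨n - 6, by omega⟩
  have hdesc : ((k + 6).descFactorial 3 : ℤ)
      = ((k:ℤ) + 6) * ((k:ℤ) + 5) * ((k:ℤ) + 4) := by
    simp only [Nat.descFactorial_succ, Nat.descFactorial_zero,
      show k + 6 - 2 = k + 4 from by omega, show k + 6 - 1 = k + 5 from by omega,
      Nat.sub_zero, mul_one]
    push_cast; ring
  have hpZ : ((p : ℤ)) = ((k:ℤ) + 4) * ((k:ℤ) + 1) := by
    rw [hp, show k + 6 - 2 = k + 4 from by omega, show k + 6 - 5 = k + 1 from by omega]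
    push_cast; ring
  have hcountZ : (3 : ℤ) * (K.card : ℤ) = ((k:ℤ) + 6) * ((k:ℤ) + 5) * ((k:ℤ) + 4) := by
    rw [← hdesc, ← hcount]; push_cast; ring
  have hkey : 3 * m * ((k:ℤ) + 1) = ((k:ℤ) + 6) * ((k:ℤ) + 5) := by
    have h2 : 3 * (m * (p:ℤ)) = ((k:ℤ) + 6) * ((k:ℤ) + 5) * ((k:ℤ) + 4) := by
      rw [hZ]; exact hcountZ
    rw [hpZ] at h2
    have h4 : ((k:ℤ) + 4) ≠ 0 := by positivity
    apply mul_right_cancel₀ h4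
    linear_combination h2
  constructor
  · refine ⟨m, ?_⟩
    push_cast
    linear_combination -hkey
  · -- (k+1) ∣ 20
    have hdvd : ((k:ℤ) + 1) ∣ 20 := by
      refine ⟨3 * m - ((k:ℤ) + 10), ?_⟩
      linear_combination -hkey
    have hdvdN : (k + 1) ∣ 20 := by exact_mod_cast hdvd
    have hle : k + 1 ≤ 20 := Nat.le_of_dvd (by norm_num) hdvdN
    simp only [Set.mem_insert_iff, Set.mem_singleton_iff]
    rcases dvd_twenty (k + 1) hdvdN with h | h | h | h | h | h | h <;> omega
end

section
/- Let n > 12 be an integer such that 2(n−10)(11n−135) is a perfect square divisible by 16. Then a contradiction follows; i.e., there is no integer n > 12 with 2(n−10)(11n−135) a perfect square divisible by 16. -/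
/-!
Put `a = n - 10` and `b = 11n - 135`, so `11a - b = 25` and `a + b` is odd. As `16 ∣ 2ab`, `8`
divides the even one of `a`, `b`, which forces the odd one, `x`, to be `3 mod 4`. But with `y` the
other factor, `x * (2y) = m ^ 2` and `gcd(x, 2y)` is an odd divisor of `2(11a - b) = 50`, hence
`1 mod 4`; since `x` is `gcd(x, 2y)` times an odd square, `x` is `1 mod 4`.
-/

theorem Int.exists_eq_gcd_mul_sq_of_mul_eq_sq {a b c : ℤ} (ha : 0 < a) (h : a * b = c ^ 2) :
    ∃ r : ℤ, a = a.gcd b * r ^ 2 := by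
  have hg : 0 < a.gcd b := Int.gcd_pos_of_ne_zero_left b ha.ne'
  obtain ⟨a', b', hcop, ha', hb'⟩ := Int.exists_gcd_one hg
  have hg' : (0 : ℤ) < a.gcd b := by exact_mod_cast hg
  set g : ℤ := (a.gcd b : ℤ)
  obtain ⟨s, rfl⟩ : g ∣ c := by
    rw [← Int.pow_dvd_pow_iff two_ne_zero, ← h, ha', hb']
    exact ⟨a' * b', by ring⟩
  have hs : a' * b' = s ^ 2 := by
    apply mul_left_cancel₀ (pow_ne_zero 2 hg'.ne')
    linear_combination (ha' ▸ hb' ▸ h : a' * g * (b' * g) = (g * s) ^ 2)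
  obtain ⟨r, hr | hr⟩ := Int.sq_of_gcd_eq_one hcop hs
  · exact ⟨r, by rw [ha', hr, mul_comm]⟩
  · nlinarith [sq_nonneg r]

theorem Int.emod_four_eq_one_of_mul_eq_sq {x y c : ℤ} (hx : 0 < x) (hodd : Odd x)
    (h : x * y = c ^ 2) (hg : x.gcd y % 4 = 1) : x % 4 = 1 := by
  obtain ⟨r, hr⟩ := Int.exists_eq_gcd_mul_sq_of_mul_eq_sq hx h
  have hr_odd : Odd r := by
    rw [hr] at hodd
    exact (Int.odd_pow' two_ne_zero).mp (Int.odd_mul.mp hodd).2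
  have hg' : (x.gcd y : ℤ) % 4 = 1 := by exact_mod_cast hg
  rw [hr, Int.mul_emod, hg', Int.sq_mod_four_eq_one_of_odd hr_odd]
  rfl

theorem Int.gcd_mod_four_eq_one_of_dvd_fifty {x z : ℤ} (hodd : Odd x) (h : x.gcd z ∣ 50) :
    x.gcd z % 4 = 1 := by
  have h50 : x.gcd z ∈ Nat.divisors 50 := Nat.mem_divisors.mpr ⟨h, by norm_num⟩
  have hg_odd : Odd (x.gcd z) := hodd.natAbs.of_dvd_nat (Nat.gcd_dvd_left _ _)
  revert hg_odd
  generalize x.gcd z = g at h50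
  revert g
  decide

theorem Int.two_pow_dvd_of_dvd_mul_odd {a b : ℤ} {k : ℕ} (hb : Odd b) (h : 2 ^ k ∣ a * b) :
    2 ^ k ∣ a :=
  (Int.isCoprime_two_left.mpr hb).pow_left.dvd_of_dvd_mul_right h

/-- There is no integer `n > 12` such that `2(n−10)(11n−135)` is a perfect square
divisible by 16. -/
theorem stmt14 (n : ℤ) (hn : 12 < n) (m : ℤ)
    (hsq : 2 * (n - 10) * (11 * n - 135) = m ^ 2)
    (hdvd : (16 : ℤ) ∣ 2 * (n - 10) * (11 * n - 135)) : False := by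
  have h8 : 2 ^ 3 ∣ (n - 10) * (11 * n - 135) := by
    obtain ⟨k, hk⟩ := hdvd
    exact ⟨k, by linarith⟩
  rcases Int.even_or_odd n with heven | hodd
  · have hb : Odd (11 * n - 135) := Int.odd_iff.mpr (by have hn2 := Int.even_iff.mp heven; omega)
    obtain ⟨k, hk⟩ := Int.two_pow_dvd_of_dvd_mul_odd hb h8
    have hb_mod := Int.emod_four_eq_one_of_mul_eq_sq (y := 2 * (n - 10)) (c := m) (by omega) hb
      (by linear_combination hsq)
      (Int.gcd_mod_four_eq_one_of_dvd_fifty hb (Int.gcd_dvd_iff.mpr ⟨-2, 11, by push_cast; ring⟩))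
    omega
  · have ha : Odd (n - 10) := Int.odd_iff.mpr (by have hn2 := Int.odd_iff.mp hodd; omega)
    obtain ⟨k, hk⟩ := Int.two_pow_dvd_of_dvd_mul_odd ha (mul_comm (n - 10) _ ▸ h8)
    have ha_mod := Int.emod_four_eq_one_of_mul_eq_sq (y := 2 * (11 * n - 135)) (c := m) (by omega) ha
      (by linear_combination hsq)
      (Int.gcd_mod_four_eq_one_of_dvd_fifty ha (Int.gcd_dvd_iff.mpr ⟨22, -1, by push_cast; ring⟩))
    omega
end

section
/- Let x be a k-cycle and y a permutation in S_n with ‖xy‖ = ‖x‖ + ‖y‖ (transposition lengths add). Then each cycle of y intersects the support of x in at most one point. Conversely, if each cycle of y meets the support of x in at most one point, then ‖xy‖ = ‖x‖ + ‖y‖. -/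
/-!
Multiplying `f` by a transposition `(a b)` lowers `‖f‖` by one when `a` and `b` lie in the same
cycle of `f` (the cycle splits) and raises it by one otherwise (two cycles merge); in particular
`‖·‖` is subadditive. Writing the cycle `x = (a₁ … a_k)` as the product of the `k - 1`
transpositions `(a₁ a₂)(a₂ a₃)⋯`, if the `aᵢ` lie in distinct cycles of `y` then every factor
merges two cycles of what it acts on, so `‖xy‖ = ‖x‖ + ‖y‖`. If instead two points `u ≠ v` of the
support of `x` lie in one cycle of `y`, then `xy = (x (u v)) ((u v) y)` with both factors one
shorter, so `‖xy‖ ≤ ‖x‖ + ‖y‖ - 2`.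
-/

open Equiv

namespace List

theorem formPerm_cons_append_cons {α : Type*} [DecidableEq α] {a b : α} {l₁ l₂ : List α}
    (h : (a :: l₁ ++ b :: l₂).Nodup) :
    formPerm (a :: l₁ ++ b :: l₂) = Equiv.swap a b * formPerm (a :: l₁) * formPerm (b :: l₂) := by
  induction l₁ generalizing a with
  | nil => simp [formPerm_cons_cons]
  | cons c l₁ ih =>
    simp only [cons_append, nodup_cons, mem_cons, mem_append, not_or] at h ih ⊢
    have hswap : Equiv.swap a c * Equiv.swap c b = Equiv.swap a b * Equiv.swap a c := by
      ext t; simp only [Perm.coe_mul, Function.comp_apply, swap_apply_def]; grind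
    rw [formPerm_cons_cons, formPerm_cons_cons, ih ⟨h.2.1, h.2.2⟩]
    simp only [← mul_assoc, hswap]

end List

namespace Equiv.Perm

open List

lemma sameCycle_mul_left_iff_of_forall_sameCycle_apply_eq_self {α : Type*} [Finite α]
    {σ f : Perm α} {a : α} (hσ : ∀ t, f.SameCycle a t → σ t = t) {t : α} :
    (σ * f).SameCycle a t ↔ f.SameCycle a t := by
  have hpow : ∀ n : ℕ, ((σ * f) ^ n) a = (f ^ n) a := by
    intro n
    induction n with
    | zero => rfl
    | succ n ih =>
      rw [pow_succ', mul_apply, ih, mul_apply, ← mul_apply f, ← pow_succ',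
        hσ _ (sameCycle_pow_right.mpr .rfl)]
  constructor <;>
  · intro h
    obtain ⟨n, -, rfl⟩ := h.exists_pow_eq'
    exact hpow n ▸ sameCycle_pow_right.mpr .rfl

lemma sameCycle_swap_mul_of_not_sameCycle {α : Type*} [Finite α] [DecidableEq α] {f : Perm α}
    {a b : α} (h : ¬f.SameCycle a b) : (swap a b * f).SameCycle a b := by
  have hex : ∃ n, (f ^ (n + 1)) a = a :=
    ⟨orderOf f - 1, by rw [Nat.sub_add_cancel (orderOf_pos f), pow_orderOf_eq_one, one_apply]⟩
  -- Along the `f`-orbit of `a`, `swap a b * f` agrees with `f` until the orbit returns to `a`,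
  -- which `swap a b * f` replaces by `b`.
  have hagree : ∀ i ≤ Nat.find hex, ((swap a b * f) ^ i) a = (f ^ i) a := by
    intro i
    induction i with
    | zero => simp
    | succ i ih =>
      intro hi
      have hne_a : (f ^ (i + 1)) a ≠ a := Nat.find_min hex (by omega)
      have hne_b : (f ^ (i + 1)) a ≠ b := fun e => h (e ▸ sameCycle_pow_right.mpr .rfl)
      rw [pow_succ', mul_apply, ih (by omega), mul_apply, ← mul_apply f, ← pow_succ',
        swap_apply_of_ne_of_ne hne_a hne_b]
  have hb : ((swap a b * f) ^ (Nat.find hex + 1)) a = b := by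
    rw [pow_succ', mul_apply, hagree _ le_rfl, mul_apply, ← mul_apply f, ← pow_succ',
      Nat.find_spec hex, swap_apply_left]
  have := sameCycle_pow_right (f := swap a b * f) (n := Nat.find hex + 1) |>.mpr (.refl _ a)
  rwa [hb] at this

variable {α : Type*} [Fintype α] [DecidableEq α]

/-- The paper's `‖f‖`: the least number of transpositions whose product is `f`. -/
def reflectionLength (f : Perm α) : ℕ := (f.cycleType.map (· - 1)).sum

lemma reflectionLength_eq_sum_sub_card (f : Perm α) :
    f.reflectionLength = f.cycleType.sum - Multiset.card f.cycleType := by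
  have h : f.cycleType.sum = (f.cycleType.map fun n => n - 1 + 1).sum := by
    rw [Multiset.map_congr rfl fun n hn => Nat.sub_add_cancel
      (one_le_two.trans (two_le_of_mem_cycleType hn)), Multiset.map_id']
  rw [h, Multiset.sum_map_add, reflectionLength]
  simp

@[simp]
lemma reflectionLength_one : reflectionLength (1 : Perm α) = 0 := by
  simp [reflectionLength]

@[simp]
lemma reflectionLength_inv (f : Perm α) : f⁻¹.reflectionLength = f.reflectionLength := by
  simp [reflectionLength]

lemma Disjoint.reflectionLength_mul {f g : Perm α} (h : f.Disjoint g) :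
    (f * g).reflectionLength = f.reflectionLength + g.reflectionLength := by
  simp [reflectionLength, h.cycleType_mul]

lemma IsCycle.reflectionLength {f : Perm α} (hf : f.IsCycle) :
    f.reflectionLength = f.support.card - 1 := by
  simp [Perm.reflectionLength, hf.cycleType]

lemma reflectionLength_formPerm {l : List α} (hl : l.Nodup) :
    l.formPerm.reflectionLength = l.length - 1 := by
  rcases l with _ | ⟨a, _ | ⟨b, l⟩⟩
  · simp
  · simp
  · rw [(isCycle_formPerm hl (by simp)).reflectionLength,
      support_formPerm_of_nodup _ hl (by simp), toFinset_card_of_nodup hl]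

lemma exists_toList_eq_cons {f : Perm α} {a : α} (ha : a ∈ f.support) :
    ∃ l, f.toList a = a :: l := by
  have hpos := length_toList_pos_of_mem_support f a ha
  rcases hl : f.toList a with _ | ⟨c, l⟩
  · simp [hl] at hpos
  · have hc := getElem_toList f a 0 hpos
    simp only [hl, getElem_cons_zero, pow_zero, one_apply] at hc
    exact ⟨l, hc ▸ rfl⟩

lemma IsCycle.reflectionLength_swap_mul {f : Perm α} (hf : f.IsCycle) {a b : α} (hab : a ≠ b)
    (ha : a ∈ f.support) (hb : b ∈ f.support) :
    (swap a b * f).reflectionLength + 1 = f.reflectionLength := by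
  obtain ⟨l, hl⟩ := exists_toList_eq_cons ha
  have hbl : b ∈ l := by
    have := mem_toList_iff.mpr ⟨hf.sameCycle (mem_support.mp ha) (mem_support.mp hb), ha⟩
    rwa [hl, mem_cons, or_iff_right hab.symm] at this
  obtain ⟨l₁, l₂, rfl⟩ := append_of_mem hbl
  replace hl : f.toList a = a :: l₁ ++ b :: l₂ := hl
  have hnd : (a :: l₁ ++ b :: l₂).Nodup := hl ▸ nodup_toList f a
  have hf' : f = formPerm (a :: l₁ ++ b :: l₂) := by
    rw [← hl, formPerm_toList, hf.cycleOf_eq (mem_support.mp ha)]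
  have hdisj : (formPerm (a :: l₁)).Disjoint (formPerm (b :: l₂)) :=
    disjoint_iff_disjoint_support.mpr <|
      (disjoint_toFinset_iff_disjoint.mpr (disjoint_of_nodup_append hnd)).mono
        (support_formPerm_le _) (support_formPerm_le _)
  calc (swap a b * f).reflectionLength + 1
      = (formPerm (a :: l₁)).reflectionLength + (formPerm (b :: l₂)).reflectionLength + 1 := by
        rw [hf', formPerm_cons_append_cons hnd, mul_assoc, swap_mul_self_mul,
          hdisj.reflectionLength_mul]
    _ = (a :: l₁ ++ b :: l₂).length - 1 := by
        rw [reflectionLength_formPerm hnd.of_append_left,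
          reflectionLength_formPerm hnd.of_append_right, length_append]
        simp only [length_cons]
        omega
    _ = f.reflectionLength := by rw [hf', reflectionLength_formPerm hnd]

lemma reflectionLength_swap_mul_of_sameCycle {f : Perm α} {a b : α} (hab : a ≠ b)
    (h : f.SameCycle a b) : (swap a b * f).reflectionLength + 1 = f.reflectionLength := by
  have ha : a ∈ f.support := mem_support.mpr fun hfa => hab (h.eq_of_left hfa)
  set c := f.cycleOf a
  have hc : c ∈ f.cycleFactorsFinset := cycleOf_mem_cycleFactorsFinset_iff.mpr ha
  have hsupp : (swap a b).support ⊆ c.support := by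
    rw [support_swap hab, Finset.insert_subset_iff, Finset.singleton_subset_iff]
    exact ⟨mem_support_cycleOf_iff.mpr ⟨.rfl, ha⟩, mem_support_cycleOf_iff.mpr ⟨h, ha⟩⟩
  have hdisj : (f * c⁻¹).Disjoint c := disjoint_mul_inv_of_mem_cycleFactorsFinset hc
  have hcomm : swap a b * (f * c⁻¹) = f * c⁻¹ * swap a b :=
    ((hdisj.mono subset_rfl hsupp).commute).eq.symm
  have hdisj' : (f * c⁻¹).Disjoint (swap a b * c) :=
    hdisj.mono subset_rfl ((support_mul_le _ _).trans (Finset.union_subset hsupp subset_rfl))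
  calc (swap a b * f).reflectionLength + 1
      = (f * c⁻¹ * (swap a b * c)).reflectionLength + 1 := by
        rw [← mul_assoc, ← hcomm, mul_assoc, inv_mul_cancel_right]
    _ = (f * c⁻¹).reflectionLength + c.reflectionLength := by
        rw [hdisj'.reflectionLength_mul, add_assoc,
          (isCycle_cycleOf f (mem_support.mp ha)).reflectionLength_swap_mul hab
            (hsupp (by simp [support_swap hab])) (hsupp (by simp [support_swap hab]))]
    _ = f.reflectionLength := by rw [← hdisj.reflectionLength_mul, inv_mul_cancel_right]

lemma reflectionLength_swap_mul_of_not_sameCycle {f : Perm α} {a b : α}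
    (h : ¬f.SameCycle a b) : (swap a b * f).reflectionLength = f.reflectionLength + 1 := by
  have hab : a ≠ b := fun e => h (e ▸ SameCycle.refl f a)
  have := reflectionLength_swap_mul_of_sameCycle hab (sameCycle_swap_mul_of_not_sameCycle h)
  rwa [swap_mul_self_mul, eq_comm] at this

lemma reflectionLength_swap_mul_le (f : Perm α) (a b : α) :
    (swap a b * f).reflectionLength ≤ f.reflectionLength + 1 := by
  by_cases h : f.SameCycle a b
  · rcases eq_or_ne a b with rfl | hab
    · rw [swap_self, ← one_def, one_mul]
      omega
    · have := reflectionLength_swap_mul_of_sameCycle hab h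
      omega
  · exact (reflectionLength_swap_mul_of_not_sameCycle h).le

lemma reflectionLength_mul_le (f g : Perm α) :
    (f * g).reflectionLength ≤ f.reflectionLength + g.reflectionLength := by
  induction hn : f.support.card using Nat.strong_induction_on generalizing f with
  | _ n ih =>
  rcases f.support.eq_empty_or_nonempty with hf | ⟨a, ha⟩
  · simp [support_eq_empty_iff.mp hf]
  · have ha' : f a ≠ a := mem_support.mp ha
    set f' := swap a (f a) * f
    have hsplit : f'.reflectionLength + 1 = f.reflectionLength :=
      reflectionLength_swap_mul_of_sameCycle ha'.symm (sameCycle_apply_right.mpr .rfl)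
    calc (f * g).reflectionLength = (swap a (f a) * (f' * g)).reflectionLength := by
          rw [← mul_assoc, swap_mul_self_mul]
      _ ≤ (f' * g).reflectionLength + 1 := reflectionLength_swap_mul_le _ _ _
      _ ≤ f'.reflectionLength + g.reflectionLength + 1 :=
          Nat.add_le_add_right (ih _ (hn ▸ card_support_swap_mul ha') f' rfl) 1
      _ = f.reflectionLength + g.reflectionLength := by omega

lemma reflectionLength_mul_add_two_le {f g : Perm α} {a b : α} (hab : a ≠ b)
    (hf : f.SameCycle a b) (hg : g.SameCycle a b) :
    (f * g).reflectionLength + 2 ≤ f.reflectionLength + g.reflectionLength := by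
  have hf' : (f * swap a b).reflectionLength + 1 = f.reflectionLength := by
    have := reflectionLength_swap_mul_of_sameCycle hab (sameCycle_inv.mpr hf)
    rwa [← reflectionLength_inv, mul_inv_rev, swap_inv, inv_inv, reflectionLength_inv] at this
  have hg' := reflectionLength_swap_mul_of_sameCycle hab hg
  calc (f * g).reflectionLength + 2
      = (f * swap a b * (swap a b * g)).reflectionLength + 2 := by
        rw [mul_assoc, swap_mul_self_mul]
    _ ≤ (f * swap a b).reflectionLength + (swap a b * g).reflectionLength + 2 :=
        Nat.add_le_add_right (reflectionLength_mul_le _ _) 2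
    _ = f.reflectionLength + g.reflectionLength := by omega

lemma reflectionLength_formPerm_mul {f : Perm α} {l : List α}
    (hl : l.Pairwise fun a b => ¬f.SameCycle a b) :
    (l.formPerm * f).reflectionLength = f.reflectionLength + (l.length - 1) := by
  induction l with
  | nil => simp
  | cons a l ih =>
    rcases l with _ | ⟨b, l⟩
    · simp
    · rw [pairwise_cons] at hl
      have hfix : ∀ t, f.SameCycle a t → formPerm (b :: l) t = t :=
        fun t ht => formPerm_apply_of_notMem fun hmem => hl.1 t hmem ht
      rw [formPerm_cons_cons, mul_assoc, reflectionLength_swap_mul_of_not_sameCycle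
        ((sameCycle_mul_left_iff_of_forall_sameCycle_apply_eq_self hfix).not.mpr
          (hl.1 b mem_cons_self)), ih hl.2]
      simp only [length_cons]
      omega

lemma forall_card_support_inter_le_one_iff {y : Perm α} {s : Finset α} :
    (∀ c ∈ y.cycleFactorsFinset, (c.support ∩ s).card ≤ 1) ↔
      ∀ u ∈ s, ∀ v ∈ s, y.SameCycle u v → u = v := by
  constructor
  · intro h u hu v hv huv
    by_contra hne
    have hu' : u ∈ y.support := mem_support.mpr fun hfu => hne (huv.eq_of_left hfu)
    refine hne (Finset.card_le_one.mp (h _ (cycleOf_mem_cycleFactorsFinset_iff.mpr hu')) u ?_ v ?_)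
    · exact Finset.mem_inter.mpr ⟨mem_support_cycleOf_iff.mpr ⟨.rfl, hu'⟩, hu⟩
    · exact Finset.mem_inter.mpr ⟨mem_support_cycleOf_iff.mpr ⟨huv, hu'⟩, hv⟩
  · intro h c hc
    refine Finset.card_le_one.mpr fun u hu v hv => ?_
    rw [Finset.mem_inter] at hu hv
    rw [cycle_is_cycleOf hu.1 hc] at hv
    exact h u hu.2 v hv.2 (mem_support_cycleOf_iff.mp hv.1).1

lemma IsCycle.reflectionLength_mul {x y : Perm α} (hx : x.IsCycle)
    (h : ∀ u ∈ x.support, ∀ v ∈ x.support, y.SameCycle u v → u = v) :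
    (x * y).reflectionLength = x.reflectionLength + y.reflectionLength := by
  obtain ⟨a, ha⟩ := hx.nonempty_support
  have hmem : ∀ u ∈ x.toList a, u ∈ x.support := fun u hu =>
    (mem_toList_iff.mp hu).1.mem_support_iff.mp ha
  have hpw : (x.toList a).Pairwise fun u v => ¬y.SameCycle u v :=
    (nodup_toList x a).pairwise_of_forall_ne fun u hu v hv hne hsc =>
      hne (h u (hmem u hu) v (hmem v hv) hsc)
  have hx' : (x.toList a).formPerm = x := by
    rw [formPerm_toList, hx.cycleOf_eq (mem_support.mp ha)]
  rw [← hx', reflectionLength_formPerm_mul hpw, reflectionLength_formPerm (nodup_toList x a),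
    add_comm]

lemma IsCycle.reflectionLength_mul_eq_add_iff {x y : Perm α} (hx : x.IsCycle) :
    (x * y).reflectionLength = x.reflectionLength + y.reflectionLength ↔
      ∀ u ∈ x.support, ∀ v ∈ x.support, y.SameCycle u v → u = v := by
  refine ⟨fun hadd u hu v hv huv => ?_, hx.reflectionLength_mul⟩
  by_contra hne
  have := reflectionLength_mul_add_two_le hne
    (hx.sameCycle (mem_support.mp hu) (mem_support.mp hv)) huv
  omega

end Equiv.Perm

/-- Let `x` be a cycle and `y` a permutation in `S_n`, and write
`‖π‖ = π.cycleType.sum − #cycles(π)` for the reflection length. Then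
`‖x·y‖ = ‖x‖ + ‖y‖` if and only if each cycle of `y` intersects the support of `x`
in at most one point. -/
theorem stmt16 (n : ℕ) (x y : Equiv.Perm (Fin n)) (hx : x.IsCycle) :
    (x * y).cycleType.sum - Multiset.card (x * y).cycleType =
        (x.cycleType.sum - Multiset.card x.cycleType) +
          (y.cycleType.sum - Multiset.card y.cycleType) ↔
      ∀ c ∈ y.cycleFactorsFinset, (c.support ∩ x.support).card ≤ 1 := by
  simp only [← Perm.reflectionLength_eq_sum_sub_card, Perm.forall_card_support_inter_le_one_iff]
  exact hx.reflectionLength_mul_eq_add_iff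
end

section
/- The positive integers n for which n(n−1)/2 is a perfect square are exactly the numbers of the form (2 + (3+2√2)^{k−1} + (3−2√2)^{k−1})/4 for positive integers k; in particular the sequence begins 1, 2, 9, 50, 289, 1682. -/
open Pell Pell.Solution₁

private def fund : Pell.Solution₁ 2 := Pell.Solution₁.mk 3 2 (by norm_num)

private lemma fund_x : fund.x = 3 := rfl
private lemma fund_y : fund.y = 2 := rfl

private lemma fund_fund : Pell.IsFundamental fund := by
  refine ⟨by norm_num [fund_x], by norm_num [fund_y], ?_⟩
  intro b hb
  have hp := b.prop
  rw [fund_x]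
  by_contra h
  push_neg at h
  interval_cases hx : b.x
  have h2 : (2:ℤ) ∣ 3 := ⟨b.y ^ 2, by linarith⟩
  norm_num at h2

private lemma pow_facts (j : ℕ) :
    ((fund ^ j).x : ℝ) + (fund ^ j).y * Real.sqrt 2 = (3 + 2 * Real.sqrt 2) ^ j ∧
    ((fund ^ j).x : ℝ) - (fund ^ j).y * Real.sqrt 2 = (3 - 2 * Real.sqrt 2) ^ j ∧
    (2 : ℤ) ∣ (fund ^ j).y := by
  have hs : Real.sqrt 2 * Real.sqrt 2 = 2 := Real.mul_self_sqrt (by norm_num)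
  induction j with
  | zero => simp
  | succ j ih =>
    obtain ⟨h1, h2, h3⟩ := ih
    have hx : (fund ^ (j+1)).x = (fund ^ j).x * 3 + 2 * ((fund ^ j).y * 2) := by
      rw [pow_succ, x_mul, fund_x, fund_y]
    have hy : (fund ^ (j+1)).y = (fund ^ j).x * 2 + (fund ^ j).y * 3 := by
      rw [pow_succ, y_mul, fund_x, fund_y]
    refine ⟨?_, ?_, ?_⟩
    · rw [hx, hy, pow_succ, ← h1]; push_cast; linear_combination (-2*((fund^j).y:ℝ)) * hs
    · rw [hx, hy, pow_succ, ← h2]; push_cast; linear_combination (-2*((fund^j).y:ℝ)) * hs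
    · rw [hy]; omega

/-- The positive integers `n` for which `n(n−1)/2` is a perfect square are exactly those of
the form `(2 + (3+2√2)^{k−1} + (3−2√2)^{k−1})/4` for a positive integer `k`. -/
theorem stmt18 (n : ℕ) (hn : 0 < n) :
    (∃ m : ℕ, n * (n - 1) = 2 * m ^ 2) ↔
      ∃ k : ℕ, 1 ≤ k ∧ (n : ℝ) =
        (2 + (3 + 2 * Real.sqrt 2) ^ (k - 1) + (3 - 2 * Real.sqrt 2) ^ (k - 1)) / 4 := by
  constructor
  · rintro ⟨m, hm⟩
    have hcast : ((n : ℤ)) * ((n : ℤ) - 1) = 2 * (m : ℤ) ^ 2 := by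
      have h1 : (1 : ℕ) ≤ n := hn
      zify [h1] at hm
      linarith
    have hprop : ((2 * n - 1 : ℤ)) ^ 2 - 2 * ((2 * m : ℤ)) ^ 2 = 1 := by ring_nf; nlinarith
    set a : Pell.Solution₁ 2 := Pell.Solution₁.mk (2 * n - 1) (2 * m) hprop with ha
    have hax : 0 < a.x := by
      rw [ha, Pell.Solution₁.x_mk]; omega
    have hay : 0 ≤ a.y := by rw [ha, Pell.Solution₁.y_mk]; positivity
    obtain ⟨j, hj⟩ := fund_fund.eq_pow_of_nonneg hax hay
    obtain ⟨h1, h2, -⟩ := pow_facts j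
    have hx : (fund ^ j).x = 2 * n - 1 := by rw [← hj, ha, Pell.Solution₁.x_mk]
    refine ⟨j + 1, le_add_self, ?_⟩
    have hsum : (3 + Real.sqrt 2 * 2) ^ j + (3 - Real.sqrt 2 * 2) ^ j
        = 2 * ((fund ^ j).x : ℝ) := by rw [mul_comm (Real.sqrt 2) 2]; linarith
    simp only [Nat.add_sub_cancel]
    rw [mul_comm (2:ℝ) (Real.sqrt 2)]
    rw [hx] at hsum
    push_cast at hsum
    linarith
  · rintro ⟨k, hk, hreal⟩
    obtain ⟨j, rfl⟩ : ∃ j, k = j + 1 := ⟨k - 1, (Nat.succ_pred_eq_of_pos hk).symm⟩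
    simp only [Nat.add_sub_cancel] at hreal
    obtain ⟨h1, h2, t, ht⟩ := pow_facts j
    have hsum : (n : ℝ) = (2 + 2 * ((fund ^ j).x : ℝ)) / 4 := by
      rw [hreal]; linarith
    have hx : ((fund ^ j).x : ℤ) = 2 * n - 1 := by
      have : (((fund ^ j).x : ℤ) : ℝ) = 2 * (n : ℝ) - 1 := by linarith
      exact_mod_cast this
    have hprop := (fund ^ j).prop
    rw [hx, ht] at hprop
    refine ⟨t.natAbs, ?_⟩
    have h1n : (1 : ℕ) ≤ n := hn
    zify [h1n]
    nlinarith [Int.natAbs_sq t, sq_abs t]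
end
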